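/- Let u : ℝ³ → ℝ be Euclidean C²-smooth and x a non-characteristic point of Σ = {u = 0}. Then the limit as L → +∞ of the mean curvature H_{∇,L}(x) of Σ associated to the first Schouten–Van Kampen affine connection exists and equals X₁(p̄)(x) + X₂(q̄)(x). -/

import Mathlib

open Filter Real Topology

/-- The horizontal vector field `X₁ = ∂_{x₁} - (x₂/2)∂_{x₃}` acting on a function. -/
noncomputable def X1 (f : ℝ → ℝ → ℝ → ℝ) (x y z : ℝ) : ℝ :=
  deriv (fun s => f s y z) x - (y / 2) * deriv (fun s => f x y s) z

/-- The horizontal vector field `X₂ = ∂_{x₂} + (x₁/2)∂_{x₃}` acting on a function. -/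
noncomputable def X2 (f : ℝ → ℝ → ℝ → ℝ) (x y z : ℝ) : ℝ :=
  deriv (fun s => f x s z) y + (x / 2) * deriv (fun s => f x y s) z

/-- The vertical vector field `X₃ = ∂_{x₃}` acting on a function. -/
noncomputable def X3 (f : ℝ → ℝ → ℝ → ℝ) (x y z : ℝ) : ℝ :=
  deriv (fun s => f x y s) z

/-!
Put `ε = L^{-1/2}`. At the point, `l_L → l ≠ 0`, `r̄_L → 0` and `X_i(r/l) = ε X_i(X₃u/l) → 0`.
By the quotient rule, `X₃(r̄_L)` is a continuous expression in `ε X₃u`, `ε X₃X₃u` and the vertical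
derivatives of `X₁u`, `X₂u` (which exist because `u` is `C²`) that vanishes at `ε = 0`. Hence the
first term of `H_{∇,L}` tends to `X₁(p̄) + X₂(q̄)` and the other two tend to `0`.
-/

def uncurry3 (u : ℝ → ℝ → ℝ → ℝ) (v : ℝ × ℝ × ℝ) : ℝ := u v.1 v.2.1 v.2.2

section VerticalRegularity

variable {u : ℝ → ℝ → ℝ → ℝ}

lemma X1_div_const (f : ℝ → ℝ → ℝ → ℝ) (k a b c : ℝ) :
    X1 (fun a b c => f a b c / k) a b c = X1 f a b c / k := by
  simp only [X1, deriv_div_const]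
  ring

lemma X2_div_const (f : ℝ → ℝ → ℝ → ℝ) (k a b c : ℝ) :
    X2 (fun a b c => f a b c / k) a b c = X2 f a b c / k := by
  simp only [X2, deriv_div_const]
  ring

lemma deriv_comp_eq_fderiv_apply {E : Type*} [NormedAddCommGroup E] [NormedSpace ℝ E]
    {U : E → ℝ} (hU : Differentiable ℝ U) {γ : ℝ → E} {v : E} {t : ℝ}
    (hγ : HasDerivAt γ v t) : deriv (fun s => U (γ s)) t = fderiv ℝ U (γ t) v :=
  ((hU (γ t)).hasFDerivAt.comp_hasDerivAt t hγ).deriv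

lemma deriv_fst_eq_fderiv (hu : Differentiable ℝ (uncurry3 u)) (a b c : ℝ) :
    deriv (fun s => u s b c) a = fderiv ℝ (uncurry3 u) (a, b, c) (1, 0, 0) :=
  deriv_comp_eq_fderiv_apply hu
    ((hasDerivAt_id a).prodMk ((hasDerivAt_const a b).prodMk (hasDerivAt_const a c)))

lemma deriv_snd_eq_fderiv (hu : Differentiable ℝ (uncurry3 u)) (a b c : ℝ) :
    deriv (fun s => u a s c) b = fderiv ℝ (uncurry3 u) (a, b, c) (0, 1, 0) :=
  deriv_comp_eq_fderiv_apply hu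
    ((hasDerivAt_const b a).prodMk ((hasDerivAt_id b).prodMk (hasDerivAt_const b c)))

lemma deriv_thd_eq_fderiv (hu : Differentiable ℝ (uncurry3 u)) (a b c : ℝ) :
    deriv (fun s => u a b s) c = fderiv ℝ (uncurry3 u) (a, b, c) (0, 0, 1) :=
  deriv_comp_eq_fderiv_apply hu
    ((hasDerivAt_const c a).prodMk ((hasDerivAt_const c b).prodMk (hasDerivAt_id c)))

lemma differentiable_fderiv_apply_vertical (hu : ContDiff ℝ 2 (uncurry3 u)) (a b : ℝ)
    (v : ℝ × ℝ × ℝ) : Differentiable ℝ fun s => fderiv ℝ (uncurry3 u) (a, b, s) v := by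
  have hline : ContDiff ℝ 1 fun s : ℝ => fderiv ℝ (uncurry3 u) (a, b, s) :=
    (hu.fderiv_right le_rfl).comp (contDiff_const.prodMk (contDiff_const.prodMk contDiff_id))
  exact (hline.differentiable one_ne_zero).clm_apply (differentiable_const v)

lemma differentiable_X1_vertical (hu : ContDiff ℝ 2 (uncurry3 u)) (a b : ℝ) :
    Differentiable ℝ fun s => X1 u a b s := by
  have hdiff := hu.differentiable two_ne_zero
  simp only [X1, deriv_fst_eq_fderiv hdiff, deriv_thd_eq_fderiv hdiff]
  exact (differentiable_fderiv_apply_vertical hu a b _).sub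
    ((differentiable_fderiv_apply_vertical hu a b _).const_mul _)

lemma differentiable_X2_vertical (hu : ContDiff ℝ 2 (uncurry3 u)) (a b : ℝ) :
    Differentiable ℝ fun s => X2 u a b s := by
  have hdiff := hu.differentiable two_ne_zero
  simp only [X2, deriv_snd_eq_fderiv hdiff, deriv_thd_eq_fderiv hdiff]
  exact (differentiable_fderiv_apply_vertical hu a b _).add
    ((differentiable_fderiv_apply_vertical hu a b _).const_mul _)

lemma differentiable_X3_vertical (hu : ContDiff ℝ 2 (uncurry3 u)) (a b : ℝ) :
    Differentiable ℝ fun s => X3 u a b s := by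
  simp only [X3, deriv_thd_eq_fderiv (hu.differentiable two_ne_zero)]
  exact differentiable_fderiv_apply_vertical hu a b _

end VerticalRegularity

section Limits

lemma tendsto_div_sqrt_atTop (c : ℝ) : Tendsto (fun L => c / √L) atTop (𝓝 0) :=
  tendsto_const_nhds.div_atTop tendsto_sqrt_atTop

lemma tendsto_sqrt_add_div_sqrt_sq (a c : ℝ) :
    Tendsto (fun L => √(a + (c / √L) ^ 2)) atTop (𝓝 √a) := by
  simpa using (((tendsto_div_sqrt_atTop c).pow 2).const_add a).sqrt

lemma tendsto_div_sqrt_div_sqrt_add {a : ℝ} (ha : 0 < a) (c : ℝ) :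
    Tendsto (fun L => (c / √L) / √(a + (c / √L) ^ 2)) atTop (𝓝 0) := by
  simpa [Pi.div_def] using (tendsto_div_sqrt_atTop c).div (tendsto_sqrt_add_div_sqrt_sq a c)
    (sqrt_ne_zero'.mpr ha)

lemma hasDerivAt_div_sqrt_add_sq {a h : ℝ → ℝ} {a' h' z : ℝ} (ha : HasDerivAt a a' z)
    (hh : HasDerivAt h h' z) (hpos : 0 < a z + h z ^ 2) :
    HasDerivAt (fun s => h s / √(a s + h s ^ 2))
      ((h' * √(a z + h z ^ 2) - h z * ((a' + 2 * h z * h') / (2 * √(a z + h z ^ 2))))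
        / √(a z + h z ^ 2) ^ 2) z := by
  have hN : HasDerivAt (fun s => √(a s + h s ^ 2))
      ((a' + 2 * h z * h') / (2 * √(a z + h z ^ 2))) z := by
    simpa using (ha.add (hh.pow 2)).sqrt hpos.ne'
  exact hh.div hN (sqrt_ne_zero'.mpr hpos)

lemma tendsto_deriv_div_sqrt_add_vertical {a w : ℝ → ℝ} {z : ℝ}
    (ha : DifferentiableAt ℝ a z) (hw : DifferentiableAt ℝ w z) (hpos : 0 < a z) :
    Tendsto (fun L => deriv (fun s => (w s / √L) / √(a s + (w s / √L) ^ 2)) z) atTop (𝓝 0) := by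
  have hderiv : ∀ L, deriv (fun s => (w s / √L) / √(a s + (w s / √L) ^ 2)) z =
      ((deriv w z / √L) * √(a z + (w z / √L) ^ 2) - w z / √L *
        ((deriv a z + 2 * (w z / √L) * (deriv w z / √L)) / (2 * √(a z + (w z / √L) ^ 2))))
        / √(a z + (w z / √L) ^ 2) ^ 2 := fun L =>
    (hasDerivAt_div_sqrt_add_sq ha.hasDerivAt (hw.hasDerivAt.div_const √L)
      (by positivity)).deriv
  have hN := tendsto_sqrt_add_div_sqrt_sq (a z) (w z)
  have hN0 : √(a z) ≠ 0 := sqrt_ne_zero'.mpr hpos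
  have hc := tendsto_div_sqrt_atTop (w z)
  have hc' := tendsto_div_sqrt_atTop (deriv w z)
  simp only [hderiv]
  have hD := ((tendsto_const_nhds (x := deriv a z)).add ((hc.const_mul 2).mul hc')).div
    (hN.const_mul 2) (mul_ne_zero two_ne_zero hN0)
  simpa [Pi.div_def] using ((hc'.mul hN).sub (hc.mul hD)).div (hN.pow 2) (pow_ne_zero 2 hN0)

end Limits

theorem mean_curvature_limit_first_SvK
    (u pb qb : ℝ → ℝ → ℝ → ℝ) (rbF rol : ℝ → ℝ → ℝ → ℝ → ℝ)
    (lL H : ℝ → ℝ) (l0 x y z : ℝ)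
    (hu : ContDiff ℝ 2 (fun v : ℝ × ℝ × ℝ => u v.1 v.2.1 v.2.2))
    (hl0 : l0 = Real.sqrt ((X1 u x y z)^2 + (X2 u x y z)^2))
    (hnc : l0 ≠ 0)
    (hrbF : ∀ L a b c, rbF L a b c = (X3 u a b c / Real.sqrt L) /
      Real.sqrt ((X1 u a b c)^2 + (X2 u a b c)^2 + (X3 u a b c / Real.sqrt L)^2))
    (hrol : ∀ L a b c, rol L a b c = (X3 u a b c / Real.sqrt L) /
      Real.sqrt ((X1 u a b c)^2 + (X2 u a b c)^2))
    (hlL : ∀ L, lL L = Real.sqrt ((X1 u x y z)^2 + (X2 u x y z)^2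
      + (X3 u x y z / Real.sqrt L)^2))
    (hH : ∀ L, H L = (l0 / lL L) * (X1 pb x y z + X2 qb x y z)
      - (l0^2 / (lL L)^2) * (rbF L x y z * pb x y z * X1 (rol L) x y z
          + rbF L x y z * qb x y z * X2 (rol L) x y z)
      + (1 / Real.sqrt L) * X3 (rbF L) x y z) :
    Filter.Tendsto (fun L => H L) Filter.atTop (nhds (X1 pb x y z + X2 qb x y z)) := by
  have hpos : 0 < X1 u x y z ^ 2 + X2 u x y z ^ 2 := by
    rw [← sqrt_pos, ← hl0]
    exact hnc.symm.lt_of_le (hl0 ▸ sqrt_nonneg _)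
  have hlim_lL : Tendsto lL atTop (𝓝 l0) := by
    rw [funext hlL, hl0]
    exact tendsto_sqrt_add_div_sqrt_sq _ (X3 u x y z)
  have hlim_rbF : Tendsto (fun L => rbF L x y z) atTop (𝓝 0) := by
    simpa only [hrbF] using tendsto_div_sqrt_div_sqrt_add hpos (X3 u x y z)
  set g : ℝ → ℝ → ℝ → ℝ := fun a b c => X3 u a b c / √(X1 u a b c ^ 2 + X2 u a b c ^ 2)
  have hrol_eq : ∀ L, rol L = fun a b c => g a b c / √L := fun L =>
    funext fun a => funext fun b => funext fun c => (hrol L a b c).trans (div_right_comm _ _ _)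
  have hlim_X1rol : Tendsto (fun L => X1 (rol L) x y z) atTop (𝓝 0) := by
    simpa only [hrol_eq, X1_div_const] using tendsto_div_sqrt_atTop (X1 g x y z)
  have hlim_X2rol : Tendsto (fun L => X2 (rol L) x y z) atTop (𝓝 0) := by
    simpa only [hrol_eq, X2_div_const] using tendsto_div_sqrt_atTop (X2 g x y z)
  have hlim_X3rbF : Tendsto (fun L => X3 (rbF L) x y z) atTop (𝓝 0) := by
    simp only [X3, hrbF]
    exact tendsto_deriv_div_sqrt_add_vertical
      (((differentiable_X1_vertical hu x y z).pow 2).add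
        ((differentiable_X2_vertical hu x y z).pow 2))
      (differentiable_X3_vertical hu x y z) hpos
  have hlim_first := ((tendsto_const_nhds (x := l0)).div hlim_lL hnc).mul_const
    (X1 pb x y z + X2 qb x y z)
  have hlim_second :=
    ((tendsto_const_nhds (x := l0 ^ 2)).div (hlim_lL.pow 2) (pow_ne_zero 2 hnc)).mul
    (((hlim_rbF.mul_const (pb x y z)).mul hlim_X1rol).add
      ((hlim_rbF.mul_const (qb x y z)).mul hlim_X2rol))
  have hlim_third := (tendsto_div_sqrt_atTop 1).mul hlim_X3rbF
  simpa [hH, div_self hnc] using (hlim_first.sub hlim_second).add hlim_third
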